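/- arXiv:2304.14077 — 4 statements merged into one kernel-verified Lean document; each statement's English description precedes it below -/
import Mathlib

section
/- Let n ≥ 1, let V be a real linear subspace of the space of complex n×n matrices equipped with the Frobenius norm, and let A ∈ V. Suppose c is a real-valued function on matrices such that for every X ∈ V, the quantity sup{‖exp(X+E) − exp(X)‖_F : E ∈ V, ‖E‖_F ≤ ε}/ε tends to c(X) as ε → 0⁺ (i.e., c is the structured level-1 condition number of the matrix exponential with perturbations restricted to V). Then limsup_{ε→0⁺} of sup{|c(A+Z) − c(A)| : Z ∈ V, ‖Z‖_F ≤ ε}/ε is at most sup{‖D²exp(A)[E,Z]‖_F : E, Z ∈ V, ‖E‖_F = 1, ‖Z‖_F = 1}, where D²exp(A)[E,Z] is the second (real) Fréchet derivative of the matrix exponential at A applied to the pair of directions (E, Z). -/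
/-! On a subspace `V`, the level-1 condition number of a differentiable map `f` at `X` is the
operator norm of `Df(X)` restricted to `V`. The operator norm is 1-Lipschitz, so
`|c(A + Z) - c(A)| ≤ ‖(Df(A + Z) - Df(A))|_V‖ ≤ ‖D²f(A)[Z, ·]|_V‖ + o(‖Z‖)`, and
`‖D²f(A)[Z, ·]|_V‖` is at most `‖Z‖` times the supremum of `‖D²f(A)[Z', E]‖` over unit
`E, Z' ∈ V`. -/

open Filter Topology Matrix

attribute [local instance] Matrix.frobeniusSeminormedAddCommGroup
  Matrix.frobeniusNormedAddCommGroup Matrix.frobeniusIsBoundedSMul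
  Matrix.frobeniusNormedSpace Matrix.frobeniusNormedRing Matrix.frobeniusNormedAlgebra

theorem eventually_nhdsGT_forall_norm_le {E : Type*} [SeminormedAddCommGroup E] {p : E → Prop}
    (h : ∀ᶠ x in 𝓝 0, p x) :
    ∀ᶠ ε in 𝓝[>] (0 : ℝ), ∀ x : E, ‖x‖ ≤ ε → p x := by
  obtain ⟨ρ, hρ, hball⟩ := Metric.eventually_nhds_iff.1 h
  filter_upwards [Ioo_mem_nhdsGT hρ] with ε hε x hx
  exact hball (by simpa using hx.trans_lt hε.2)

section

variable {E F : Type*} [NormedAddCommGroup E] [NormedSpace ℝ E]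
  [NormedAddCommGroup F] [NormedSpace ℝ F] {V : Submodule ℝ E}

theorem ContinuousLinearMap.norm_apply_le_norm_comp_subtypeL (T : E →L[ℝ] F) {x : E}
    (hx : x ∈ V) : ‖T x‖ ≤ ‖T.comp V.subtypeL‖ * ‖x‖ :=
  (T.comp V.subtypeL).le_opNorm ⟨x, hx⟩

theorem ContinuousLinearMap.norm_comp_subtypeL_le (T : E →L[ℝ] F) :
    ‖T.comp V.subtypeL‖ ≤ ‖T‖ :=
  (T.opNorm_comp_le _).trans (mul_le_of_le_one_right (norm_nonneg T) V.norm_subtypeL_le)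

theorem ContinuousLinearMap.norm_comp_subtypeL_apply_le_sSup (B : E →L[ℝ] E →L[ℝ] F) {z : E}
    (hz : z ∈ V) :
    ‖(B z).comp V.subtypeL‖ ≤
      sSup {r : ℝ | ∃ x ∈ V, ∃ y ∈ V, ‖x‖ = 1 ∧ ‖y‖ = 1 ∧ r = ‖B y x‖} * ‖z‖ := by
  set M := sSup {r : ℝ | ∃ x ∈ V, ∃ y ∈ V, ‖x‖ = 1 ∧ ‖y‖ = 1 ∧ r = ‖B y x‖}
  have hM : 0 ≤ M := Real.sSup_nonneg <| by rintro _ ⟨x, -, y, -, -, -, rfl⟩; positivity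
  have hbdd : BddAbove {r : ℝ | ∃ x ∈ V, ∃ y ∈ V, ‖x‖ = 1 ∧ ‖y‖ = 1 ∧ r = ‖B y x‖} := by
    refine ⟨‖B‖, ?_⟩
    rintro _ ⟨x, -, y, -, hx, hy, rfl⟩
    simpa [hx, hy] using B.le_opNorm₂ y x
  have hunit : ∀ x : V, ‖x‖ = 1 → ‖B z x‖ ≤ M * ‖z‖ := fun x hx =>
    calc ‖B z x‖ = ‖(B.flip x).comp V.subtypeL ⟨z, hz⟩‖ := rfl
      _ ≤ M * ‖z‖ := by
        refine ContinuousLinearMap.le_of_opNorm_le _ ?_ _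
        exact ContinuousLinearMap.opNorm_le_of_unit_norm hM fun y hy =>
          le_csSup hbdd ⟨x, x.2, y, y.2, hx, hy, rfl⟩
  exact ContinuousLinearMap.opNorm_le_of_unit_norm (by positivity) hunit

theorem sSup_submodule_closedBall_le {g : E → ℝ} {ε C : ℝ} (hε : 0 ≤ ε)
    (h : ∀ x ∈ V, ‖x‖ ≤ ε → g x ≤ C) : sSup {r : ℝ | ∃ x ∈ V, ‖x‖ ≤ ε ∧ r = g x} ≤ C :=
  csSup_le ⟨g 0, 0, V.zero_mem, by simpa using hε, rfl⟩ <| by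
    rintro _ ⟨x, hx, hxε, rfl⟩
    exact h x hx hxε

theorem le_sSup_submodule_closedBall {g : E → ℝ} {ε C : ℝ} (h : ∀ x ∈ V, ‖x‖ ≤ ε → g x ≤ C)
    {x : E} (hx : x ∈ V) (hxε : ‖x‖ ≤ ε) : g x ≤ sSup {r : ℝ | ∃ x ∈ V, ‖x‖ ≤ ε ∧ r = g x} :=
  le_csSup ⟨C, by rintro _ ⟨x, hx, hxε, rfl⟩; exact h x hx hxε⟩ ⟨x, hx, hxε, rfl⟩

theorem HasFDerivAt.eventually_nhdsGT_norm_sub_le {f : E → F} {f' : E →L[ℝ] F} {x : E}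
    (hf : HasFDerivAt f f' x) {δ : ℝ} (hδ : 0 < δ) :
    ∀ᶠ ε in 𝓝[>] (0 : ℝ), ∀ h : E, ‖h‖ ≤ ε → ‖f (x + h) - f x - f' h‖ ≤ δ * ‖h‖ :=
  eventually_nhdsGT_forall_norm_le ((hasFDerivAt_iff_isLittleO_nhds_zero.1 hf).def hδ)

theorem HasFDerivAt.tendsto_sSup_norm_sub_div {f : E → F} {T : E →L[ℝ] F} {X : E}
    (hf : HasFDerivAt f T X) :
    Tendsto (fun ε : ℝ => sSup {r : ℝ | ∃ h ∈ V, ‖h‖ ≤ ε ∧ r = ‖f (X + h) - f X‖} / ε)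
      (𝓝[>] 0) (𝓝 ‖T.comp V.subtypeL‖) := by
  set N := ‖T.comp V.subtypeL‖
  have hN : 0 ≤ N := norm_nonneg (T.comp V.subtypeL)
  rw [Metric.tendsto_nhds]
  intro δ hδ
  obtain ⟨x, hx1, hx⟩ :=
    (T.comp V.subtypeL).exists_lt_apply_of_lt_opNorm (show N - δ / 4 < N by linarith)
  filter_upwards [hf.eventually_nhdsGT_norm_sub_le (show 0 < δ / 4 by positivity),
    self_mem_nhdsWithin] with ε herr (hε : 0 < ε)
  have hup : ∀ h ∈ V, ‖h‖ ≤ ε → ‖f (X + h) - f X‖ ≤ (N + δ / 4) * ε := fun h hh hhε =>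
    calc ‖f (X + h) - f X‖ ≤ ‖T h‖ + ‖f (X + h) - f X - T h‖ := norm_le_norm_add_norm_sub' _ _
      _ ≤ N * ‖h‖ + δ / 4 * ‖h‖ :=
        add_le_add (T.norm_apply_le_norm_comp_subtypeL hh) (herr h hhε)
      _ ≤ (N + δ / 4) * ε := by
        rw [← add_mul]; exact mul_le_mul_of_nonneg_left hhε (by linarith)
  have hεx : ‖(ε • x : E)‖ ≤ ε := by
    rw [norm_smul, Real.norm_of_nonneg hε.le]
    exact mul_le_of_le_one_right hε.le (by simpa using hx1.le)
  have hlow : (N - δ / 2) * ε ≤ ‖f (X + ε • x) - f X‖ := by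
    have hTx : ‖T (ε • x : E)‖ = ε * ‖(T.comp V.subtypeL) x‖ := by
      rw [T.map_smul, norm_smul, Real.norm_of_nonneg hε.le]; rfl
    nlinarith [norm_le_norm_add_norm_sub (f (X + ε • x) - f X) (T (ε • x : E)), herr _ hεx]
  have hS := sSup_submodule_closedBall_le hε.le hup
  have hS' := le_sSup_submodule_closedBall hup (V.smul_mem ε x.2) hεx
  rw [Real.dist_eq, abs_lt, lt_sub_iff_add_lt, sub_lt_iff_lt_add, lt_div_iff₀ hε, div_lt_iff₀ hε]
  constructor <;> nlinarith

theorem HasFDerivAt.eventually_abs_norm_comp_subtypeL_sub_le {D : E → E →L[ℝ] F}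
    {D₂ : E →L[ℝ] E →L[ℝ] F} {A : E} (hD : HasFDerivAt D D₂ A) {δ : ℝ} (hδ : 0 < δ) :
    ∀ᶠ ε in 𝓝[>] (0 : ℝ), ∀ z ∈ V, ‖z‖ ≤ ε →
      |‖(D (A + z)).comp V.subtypeL‖ - ‖(D A).comp V.subtypeL‖| ≤
        (sSup {r : ℝ | ∃ x ∈ V, ∃ y ∈ V, ‖x‖ = 1 ∧ ‖y‖ = 1 ∧ r = ‖D₂ y x‖} + δ) * ‖z‖ := by
  filter_upwards [hD.eventually_nhdsGT_norm_sub_le hδ] with ε herr z hz hzε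
  calc |‖(D (A + z)).comp V.subtypeL‖ - ‖(D A).comp V.subtypeL‖|
      ≤ ‖(D (A + z)).comp V.subtypeL - (D A).comp V.subtypeL‖ :=
        abs_norm_sub_norm_le (E := V →L[ℝ] F) _ _
    _ = ‖(D (A + z) - D A - D₂ z).comp V.subtypeL + (D₂ z).comp V.subtypeL‖ := by
      rw [← ContinuousLinearMap.sub_comp, ← ContinuousLinearMap.add_comp, sub_add_cancel]
    _ ≤ δ * ‖z‖ + sSup {r : ℝ | ∃ x ∈ V, ∃ y ∈ V, ‖x‖ = 1 ∧ ‖y‖ = 1 ∧ r = ‖D₂ y x‖} * ‖z‖ :=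
      (norm_add_le (E := V →L[ℝ] F) _ _).trans (add_le_add
        ((ContinuousLinearMap.norm_comp_subtypeL_le _).trans (herr z hzε))
        (D₂.norm_comp_subtypeL_apply_le_sSup hz))
    _ = _ := by ring

theorem limsup_sSup_abs_sub_div_le_sSup_norm_fderiv_fderiv {f : E → F} {A : E}
    (hf : Differentiable ℝ f) (hf' : DifferentiableAt ℝ (fderiv ℝ f) A) (hA : A ∈ V)
    (c : E → ℝ)
    (hc : ∀ X ∈ V, Tendsto (fun ε : ℝ =>
        sSup {r : ℝ | ∃ h ∈ V, ‖h‖ ≤ ε ∧ r = ‖f (X + h) - f X‖} / ε) (𝓝[>] 0) (𝓝 (c X))) :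
    limsup (fun ε : ℝ => sSup {r : ℝ | ∃ z ∈ V, ‖z‖ ≤ ε ∧ r = |c (A + z) - c A|} / ε) (𝓝[>] 0)
      ≤ sSup {r : ℝ | ∃ x ∈ V, ∃ y ∈ V, ‖x‖ = 1 ∧ ‖y‖ = 1 ∧
          r = ‖fderiv ℝ (fderiv ℝ f) A y x‖} := by
  set M := sSup {r : ℝ | ∃ x ∈ V, ∃ y ∈ V, ‖x‖ = 1 ∧ ‖y‖ = 1 ∧
    r = ‖fderiv ℝ (fderiv ℝ f) A y x‖}
  have hM : 0 ≤ M := Real.sSup_nonneg <| by rintro _ ⟨x, -, y, -, -, -, rfl⟩; positivity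
  have hcX : ∀ X ∈ V, c X = ‖(fderiv ℝ f X).comp V.subtypeL‖ := fun X hX =>
    tendsto_nhds_unique (hc X hX) (hf X).hasFDerivAt.tendsto_sSup_norm_sub_div
  refine le_of_forall_pos_le_add fun δ hδ => limsup_le_of_le ?_ ?_
  · refine isCoboundedUnder_le_of_eventually_le _ (x := 0) ?_
    filter_upwards [self_mem_nhdsWithin] with ε (hε : 0 < ε)
    exact div_nonneg (Real.sSup_nonneg <| by rintro _ ⟨z, -, -, rfl⟩; positivity) hε.le
  · filter_upwards [hf'.hasFDerivAt.eventually_abs_norm_comp_subtypeL_sub_le hδ,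
      self_mem_nhdsWithin] with ε hlip (hε : 0 < ε)
    rw [div_le_iff₀ hε]
    refine sSup_submodule_closedBall_le hε.le fun z hz hzε => ?_
    rw [hcX _ (V.add_mem hA hz), hcX A hA]
    exact (hlip z hz hzε).trans (mul_le_mul_of_nonneg_left hzε (by positivity))

end

theorem structured_level2_condition_number_exp_upper_bound_general
    (n : ℕ)
    (V : Submodule ℝ (Matrix (Fin n) (Fin n) ℂ))
    (A : Matrix (Fin n) (Fin n) ℂ) (hA : A ∈ V)
    (c : Matrix (Fin n) (Fin n) ℂ → ℝ)
    (hc : ∀ X ∈ V,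
      Tendsto (fun ε : ℝ =>
          (sSup {r : ℝ | ∃ E ∈ V, ‖E‖ ≤ ε ∧
            r = ‖NormedSpace.exp (X + E) - NormedSpace.exp X‖}) / ε)
        (𝓝[>] 0) (𝓝 (c X))) :
    Filter.limsup (fun ε : ℝ =>
        (sSup {r : ℝ | ∃ Z ∈ V, ‖Z‖ ≤ ε ∧ r = |c (A + Z) - c A|}) / ε) (𝓝[>] 0)
      ≤ sSup {r : ℝ | ∃ E ∈ V, ∃ Z ∈ V, ‖E‖ = 1 ∧ ‖Z‖ = 1 ∧
          r = ‖fderiv ℝ (fderiv ℝ NormedSpace.exp) A Z E‖} := by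
  have hexp : ContDiff ℝ 2
      (NormedSpace.exp : Matrix (Fin n) (Fin n) ℂ → Matrix (Fin n) (Fin n) ℂ) :=
    AnalyticOnNhd.contDiff fun X _ => (NormedSpace.exp_analytic (𝕂 := ℂ) X).restrictScalars
  exact limsup_sSup_abs_sub_div_le_sSup_norm_fderiv_fderiv (hexp.differentiable two_ne_zero)
    ((hexp.fderiv_right le_rfl).differentiable one_ne_zero A) hA c hc

/-- Lemma 3.1 of the paper specialized to a real linear subspace `V` of the
complex `n × n` matrices (with the Frobenius norm) and to `f = exp`: if `c X` is the structured
level-1 condition number of the matrix exponential at `X` (perturbations restricted to `V`),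
then the structured level-2 condition number at `A ∈ V` (as a limsup of difference quotients) is
bounded above by the supremum of `‖D²exp(A)[E,Z]‖` over unit-norm `E, Z ∈ V`. -/
theorem structured_level2_condition_number_exp_upper_bound
    (n : ℕ) (hn : 1 ≤ n)
    (V : Submodule ℝ (Matrix (Fin n) (Fin n) ℂ))
    (A : Matrix (Fin n) (Fin n) ℂ) (hA : A ∈ V)
    (c : Matrix (Fin n) (Fin n) ℂ → ℝ)
    (hc : ∀ X ∈ V,
      Tendsto (fun ε : ℝ =>
          (sSup {r : ℝ | ∃ E ∈ V, ‖E‖ ≤ ε ∧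
            r = ‖NormedSpace.exp (X + E) - NormedSpace.exp X‖}) / ε)
        (𝓝[>] 0) (𝓝 (c X))) :
    Filter.limsup (fun ε : ℝ =>
        (sSup {r : ℝ | ∃ Z ∈ V, ‖Z‖ ≤ ε ∧ r = |c (A + Z) - c A|}) / ε) (𝓝[>] 0)
      ≤ sSup {r : ℝ | ∃ E ∈ V, ∃ Z ∈ V, ‖E‖ = 1 ∧ ‖Z‖ = 1 ∧
          r = ‖fderiv ℝ (fderiv ℝ NormedSpace.exp) A Z E‖} :=
  structured_level2_condition_number_exp_upper_bound_general n V A hA c hc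
end

section
/- Let n ≥ 1 and let A ∈ ℂ^{n×n} be skew-Hermitian. Suppose c is a real-valued function on complex n×n matrices such that for every skew-Hermitian X, the quantity sup{‖exp(Y) − exp(X)‖₂ : Y skew-Hermitian, ‖Y − X‖₂ ≤ ε}/ε tends to c(X) as ε → 0⁺ (i.e., c is the structured level-1 condition number of the matrix exponential in the spectral norm, with skew-Hermitian perturbations). Then sup{|c(A+Z) − c(A)| : Z skew-Hermitian, ‖Z‖₂ ≤ ε}/ε tends to 0 as ε → 0⁺; that is, the structured level-2 condition number of the matrix exponential at A in the spectral norm is 0. -/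
/-!
On skew-adjoint elements of a C⋆-algebra the exponential is 1-Lipschitz: the path
`t ↦ exp (t y) exp ((1 - t) x)` runs from `exp x` to `exp y` with derivative
`exp (t y) (y - x) exp ((1 - t) x)`, whose outer factors are unitary. The perturbation
`y = x + i ε 1` attains `‖exp y - exp x‖ = |e^{iε} - 1| ~ ε`, so the structured level-1
condition number is `1` at every skew-Hermitian matrix. Being constant, it has level-2
condition number `0`.
-/

open Filter Topology Matrix NormedSpace
open scoped Matrix.Norms.L2Operator

theorem tendsto_norm_exp_ofReal_mul_I_sub_one_div :
    Tendsto (fun ε : ℝ => ‖Complex.exp (ε * Complex.I) - 1‖ / ε) (𝓝[>] 0) (𝓝 1) := by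
  have hderiv : HasDerivAt (fun t : ℝ => Complex.exp (t * Complex.I)) Complex.I 0 := by
    simpa using ((Complex.hasDerivAt_exp _).comp (0 : ℂ)
      ((hasDerivAt_id _).mul_const Complex.I)).comp_ofReal
  have hslope := (hasDerivAt_iff_tendsto_slope.mp hderiv).norm.mono_left
    (nhdsWithin_mono _ fun _ (h : (0 : ℝ) < _) => h.ne')
  rw [Complex.norm_I] at hslope
  refine hslope.congr' ?_
  filter_upwards [self_mem_nhdsWithin] with ε (hε : 0 < ε)
  simp [slope_def_module, abs_of_pos hε, div_eq_inv_mul]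

section

variable {A : Type*} [CStarAlgebra A]

theorem norm_exp_sub_exp_le_of_mem_skewAdjoint {x y : A} (hx : x ∈ skewAdjoint A)
    (hy : y ∈ skewAdjoint A) : ‖exp y - exp x‖ ≤ ‖y - x‖ := by
  -- the algebraic facts about `exp` are stated for normed `ℚ`-algebras
  let +nondep : NormedAlgebra ℚ A := .restrictScalars ℚ ℂ A
  have hU : ∀ (t : ℝ) {z : A}, z ∈ skewAdjoint A → exp (t • z) ∈ unitary A := fun t _ hz =>
    exp_mem_unitary_of_mem_skewAdjoint (skewAdjoint.smul_mem t hz)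
  let f : ℝ → A := fun t => exp (t • y) * exp ((1 - t) • x)
  have hf : ∀ t, HasDerivAt f (exp (t • y) * (y - x) * exp ((1 - t) • x)) t := by
    intro t
    have hX : HasDerivAt (fun s : ℝ => exp ((1 - s) • x)) (-(x * exp ((1 - t) • x))) t :=
      ((hasDerivAt_exp_smul_const' x (1 - t)).scomp t ((hasDerivAt_id t).const_sub 1)).congr_deriv
        (neg_one_smul ℝ _)
    exact ((hasDerivAt_exp_smul_const y t).mul hX).congr_deriv (by noncomm_ring)
  have := norm_image_sub_le_of_norm_deriv_le_segment_01' (f := f) (C := ‖y - x‖)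
    (fun t _ => (hf t).hasDerivWithinAt) fun t _ => by
      rw [CStarRing.norm_mul_mem_unitary _ (hU _ hx), CStarRing.norm_mem_unitary_mul _ (hU _ hy)]
  simpa [f] using this

theorem exp_add_algebraMap (x : A) (w : ℂ) :
    exp (x + algebraMap ℂ A w) = exp x * algebraMap ℂ A (Complex.exp w) := by
  let +nondep : NormedAlgebra ℚ A := .restrictScalars ℚ ℂ A
  rw [exp_add_of_commute (Algebra.commutes w x).symm, Complex.exp_eq_exp_ℂ, algebraMap_exp_comm]

theorem algebraMap_ofReal_mul_I_mem_skewAdjoint (t : ℝ) :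
    algebraMap ℂ A (t * Complex.I) ∈ skewAdjoint A := by
  rw [skewAdjoint.mem_iff, ← algebraMap_star_comm, ← map_neg]
  simp

theorem norm_exp_add_algebraMap_sub_exp [Nontrivial A] {x : A} (hx : x ∈ skewAdjoint A) (w : ℂ) :
    ‖exp (x + algebraMap ℂ A w) - exp x‖ = ‖Complex.exp w - 1‖ := by
  let +nondep : NormedAlgebra ℚ A := .restrictScalars ℚ ℂ A
  rw [exp_add_algebraMap, ← mul_sub_one, ← map_one (algebraMap ℂ A), ← map_sub,
    CStarRing.norm_mem_unitary_mul _ (exp_mem_unitary_of_mem_skewAdjoint hx), norm_algebraMap']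

theorem tendsto_sSup_norm_exp_sub_exp_div [Nontrivial A] {x : A} (hx : x ∈ skewAdjoint A) :
    Tendsto (fun ε : ℝ =>
        sSup {r : ℝ | ∃ y ∈ skewAdjoint A, ‖y - x‖ ≤ ε ∧ r = ‖exp y - exp x‖} / ε)
      (𝓝[>] 0) (𝓝 1) := by
  set S := fun ε : ℝ => {r : ℝ | ∃ y ∈ skewAdjoint A, ‖y - x‖ ≤ ε ∧ r = ‖exp y - exp x‖}
  have hS_le : ∀ ε, ∀ r ∈ S ε, r ≤ ε := by
    rintro ε _ ⟨y, hy, hyx, rfl⟩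
    exact (norm_exp_sub_exp_le_of_mem_skewAdjoint hx hy).trans hyx
  refine tendsto_of_tendsto_of_tendsto_of_le_of_le' tendsto_norm_exp_ofReal_mul_I_sub_one_div
    tendsto_const_nhds ?_ ?_ <;> filter_upwards [self_mem_nhdsWithin] with ε (hε : 0 < ε)
  · have hmem : ‖Complex.exp (ε * Complex.I) - 1‖ ∈ S ε :=
      ⟨x + algebraMap ℂ A (ε * Complex.I), add_mem hx (algebraMap_ofReal_mul_I_mem_skewAdjoint ε),
        by rw [add_sub_cancel_left, norm_algebraMap']; simp [abs_of_pos hε],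
        (norm_exp_add_algebraMap_sub_exp hx _).symm⟩
    gcongr
    exact le_csSup ⟨ε, hS_le ε⟩ hmem
  · rw [div_le_one hε]
    exact csSup_le ⟨0, x, hx, by simpa using hε.le, by simp⟩ (hS_le ε)

end

/-- Proposition 3.2 of the paper. If `c X` is the structured level-1 condition
number (in the spectral norm) of the matrix exponential at a skew-Hermitian `X`, with
skew-Hermitian perturbations, then the structured level-2 condition number of the matrix
exponential at a skew-Hermitian `A` is `0`. -/
theorem structured_level2_condition_number_exp_skewHermitian
    (n : ℕ) (hn : 1 ≤ n)
    (A : Matrix (Fin n) (Fin n) ℂ) (hA : Aᴴ = -A)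
    (c : Matrix (Fin n) (Fin n) ℂ → ℝ)
    (hc : ∀ X : Matrix (Fin n) (Fin n) ℂ, Xᴴ = -X →
      Tendsto (fun ε : ℝ =>
          (sSup {r : ℝ | ∃ Y : Matrix (Fin n) (Fin n) ℂ, Yᴴ = -Y ∧ ‖Y - X‖ ≤ ε ∧
            r = ‖NormedSpace.exp Y - NormedSpace.exp X‖}) / ε)
        (𝓝[>] 0) (𝓝 (c X))) :
    Tendsto (fun ε : ℝ =>
        (sSup {r : ℝ | ∃ Z : Matrix (Fin n) (Fin n) ℂ, Zᴴ = -Z ∧ ‖Z‖ ≤ ε ∧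
          r = |c (A + Z) - c A|}) / ε)
      (𝓝[>] 0) (𝓝 0) := by
  have : Nonempty (Fin n) := Fin.pos_iff_nonempty.mp hn
  have hc_one : ∀ X : Matrix (Fin n) (Fin n) ℂ, Xᴴ = -X → c X = 1 := fun X hX =>
    tendsto_nhds_unique (hc X hX) (tendsto_sSup_norm_exp_sub_exp_div hX)
  refine tendsto_const_nhds.congr' ?_
  filter_upwards [self_mem_nhdsWithin] with ε (hε : 0 < ε)
  have hset : {r : ℝ | ∃ Z : Matrix (Fin n) (Fin n) ℂ, Zᴴ = -Z ∧ ‖Z‖ ≤ ε ∧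
      r = |c (A + Z) - c A|} = {0} := by
    refine Set.eq_singleton_iff_unique_mem.mpr ⟨⟨0, by simp, by simpa using hε.le, by simp⟩, ?_⟩
    rintro _ ⟨Z, hZ, -, rfl⟩
    have hAZ : A + Z ∈ skewAdjoint _ := add_mem (show A ∈ skewAdjoint _ from hA) hZ
    rw [hc_one A hA, hc_one (A + Z) hAZ, sub_self, abs_zero]
  rw [hset, csSup_singleton, zero_div]
end

section
/- Let n ≥ 1 and let A ∈ ℂ^{n×n} be skew-Hermitian. Then ‖exp(A + iεI) − exp(A)‖₂ / ε tends to 1 as the real parameter ε → 0⁺, where I denotes the n×n identity matrix and i the imaginary unit. -/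
open Filter Topology Matrix
open scoped Matrix.Norms.L2Operator

/-!
The scalar perturbation `iεI` is central, so `exp (A + iεI) = e^{iε} • exp A`, and `exp A` is
unitary because `A` is skew-Hermitian. The quotient is therefore `|e^{iε} - 1| / ε`, which tends
to `|d/dε e^{iε}|` at `0`, that is `|i| = 1`.
-/

open Complex in
theorem tendsto_norm_cexp_mul_I_sub_one_div :
    Tendsto (fun ε : ℝ => ‖exp (ε * I) - 1‖ / ε) (𝓝[>] 0) (𝓝 1) := by
  have hderiv : HasDerivAt (fun t : ℝ => exp (t * I)) I 0 := by
    simpa using ((hasDerivAt_id (0 : ℝ)).ofReal_comp.mul_const I).cexp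
  have hslope := (continuous_norm.tendsto I).comp hderiv.tendsto_slope_zero_right
  rw [norm_I] at hslope
  refine hslope.congr' ?_
  filter_upwards [self_mem_nhdsWithin] with ε (hε : 0 < ε)
  simp [abs_of_pos hε, div_eq_inv_mul]

section ComplexBanachAlgebra

variable {𝔸 : Type*} [NormedRing 𝔸] [NormedAlgebra ℂ 𝔸] [CompleteSpace 𝔸]

theorem NormedSpace.exp_add_smul_one (a : 𝔸) (c : ℂ) :
    exp (a + c • 1) = Complex.exp c • exp a := by
  let : NormedAlgebra ℚ 𝔸 := .restrictScalars ℚ ℂ 𝔸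
  rw [exp_add_of_commute ((Commute.one_right a).smul_right c), Algebra.smul_def, mul_one,
    ← algebraMap_exp_comm, ← Complex.exp_eq_exp_ℂ, ← Algebra.commutes, ← Algebra.smul_def]

variable [StarRing 𝔸] [CStarRing 𝔸] [Nontrivial 𝔸]

theorem NormedSpace.norm_exp_of_mem_skewAdjoint {a : 𝔸} (ha : a ∈ skewAdjoint 𝔸) :
    ‖exp a‖ = 1 := by
  let : NormedAlgebra ℚ 𝔸 := .restrictScalars ℚ ℂ 𝔸
  exact CStarRing.norm_of_mem_unitary (exp_mem_unitary_of_mem_skewAdjoint ha)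

theorem NormedSpace.norm_exp_add_smul_one_sub_exp {a : 𝔸} (ha : a ∈ skewAdjoint 𝔸) (c : ℂ) :
    ‖exp (a + c • 1) - exp a‖ = ‖Complex.exp c - 1‖ := by
  rw [exp_add_smul_one]
  calc ‖Complex.exp c • exp a - exp a‖ = ‖(Complex.exp c - 1) • exp a‖ := by
        rw [sub_smul, one_smul]
    _ = ‖Complex.exp c - 1‖ := by rw [norm_smul, norm_exp_of_mem_skewAdjoint ha, mul_one]

end ComplexBanachAlgebra

/-- equation (3.6) of the paper. For a skew-Hermitian matrix `A`, the spectral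
norm of `exp(A + iεI) − exp(A)`, divided by `ε`, tends to `1` as `ε → 0⁺`. -/
theorem exp_skewHermitian_perturbation_limit
    (n : ℕ) (hn : 1 ≤ n)
    (A : Matrix (Fin n) (Fin n) ℂ) (hA : Aᴴ = -A) :
    Tendsto (fun ε : ℝ =>
        ‖NormedSpace.exp (A + ((ε : ℂ) * Complex.I) • (1 : Matrix (Fin n) (Fin n) ℂ)) -
            NormedSpace.exp A‖ / ε)
      (𝓝[>] 0) (𝓝 1) := by
  have : NeZero n := ⟨by omega⟩
  simpa only [NormedSpace.norm_exp_add_smul_one_sub_exp (skewAdjoint.mem_iff.mpr hA)]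
    using tendsto_norm_cexp_mul_I_sub_one_div
end

section
/- Let n ≥ 1 and let A ∈ ℂ^{n×n} be Hermitian with largest eigenvalue λmax(A). Suppose c is a real-valued function on complex n×n matrices such that for every Hermitian X, the quantity sup{‖exp(Y) − exp(X)‖₂ : Y Hermitian, ‖Y − X‖₂ ≤ ε}/ε tends to c(X) as ε → 0⁺ (i.e., c is the structured level-1 condition number of the matrix exponential in the spectral norm, with Hermitian perturbations). Then sup{|c(A+Z) − c(A)| : Z Hermitian, ‖Z‖₂ ≤ ε}/ε tends to e^{λmax(A)} as ε → 0⁺; that is, the structured level-2 condition number of the matrix exponential at A in the spectral norm equals e^{λmax(A)}. -/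
open Filter Topology Matrix
open scoped Matrix.Norms.L2Operator

/-!
For a self-adjoint `x` in a C*-algebra, `‖exp x‖ = e^{λmax x}`. Differentiating
`t ↦ exp (t • y) * exp ((1 - t) • x)` and using Weyl's inequality `λmax y ≤ λmax x + ‖y - x‖`
gives `‖exp y - exp x‖ ≤ ‖exp x‖ e^ε ε` when `‖y - x‖ ≤ ε`, while the shift `y = x + ε • 1`
raises `λmax` by exactly `ε` and so gives at least `(e^ε - 1) ‖exp x‖`. Hence the level-1
condition number is `c = ‖exp ·‖`. For the level-2 quotient, `|c (a + z) - c a|` is at most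
`‖exp (a + z) - exp a‖` by the reverse triangle inequality, and `z = ε • 1` again attains
`(e^ε - 1) ‖exp a‖`, so it is squeezed between the same bounds.
-/

open NormedSpace

section SpectralMax

variable {𝒜 : Type*} [CStarAlgebra 𝒜]

noncomputable def spectralMax (a : 𝒜) : ℝ := sSup (spectrum ℝ a)

variable [Nontrivial 𝒜] {a b : 𝒜}

lemma abs_le_norm_of_mem_spectrum {x : ℝ} (hx : x ∈ spectrum ℝ a) : |x| ≤ ‖a‖ := by
  simpa only [Real.norm_eq_abs] using spectrum.norm_le_norm_of_mem hx

lemma bddAbove_spectrum_real (a : 𝒜) : BddAbove (spectrum ℝ a) :=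
  ⟨‖a‖, fun _ hx => (le_abs_self _).trans (abs_le_norm_of_mem_spectrum hx)⟩

lemma spectrum_real_nonempty (ha : IsSelfAdjoint a) : (spectrum ℝ a).Nonempty :=
  ContinuousFunctionalCalculus.spectrum_nonempty a ha

lemma le_spectralMax {x : ℝ} (hx : x ∈ spectrum ℝ a) : x ≤ spectralMax a :=
  le_csSup (bddAbove_spectrum_real a) hx

lemma spectralMax_le_norm (ha : IsSelfAdjoint a) : spectralMax a ≤ ‖a‖ :=
  csSup_le (spectrum_real_nonempty ha) fun _ hx =>
    (le_abs_self _).trans (abs_le_norm_of_mem_spectrum hx)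

lemma spectralMax_eq_of_spectrum_eq_image {f : ℝ → ℝ} (hf : Monotone f) (hfc : Continuous f)
    (ha : IsSelfAdjoint a) (hb : spectrum ℝ b = f '' spectrum ℝ a) :
    spectralMax b = f (spectralMax a) := by
  rw [spectralMax, spectralMax, hb, hf.map_csSup_of_continuousAt hfc.continuousAt
    (spectrum_real_nonempty ha) (bddAbove_spectrum_real a)]

lemma spectralMax_add_algebraMap (ha : IsSelfAdjoint a) (r : ℝ) :
    spectralMax (a + algebraMap ℝ 𝒜 r) = spectralMax a + r := by
  refine spectralMax_eq_of_spectrum_eq_image (monotone_id.add_const r) (by fun_prop) ha ?_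
  rw [← spectrum.add_singleton_eq, Set.add_singleton]
  rfl

lemma spectralMax_smul (ha : IsSelfAdjoint a) {t : ℝ} (ht : 0 ≤ t) :
    spectralMax (t • a) = t * spectralMax a := by
  refine spectralMax_eq_of_spectrum_eq_image (monotone_mul_left_of_nonneg ht) (by fun_prop) ha ?_
  rw [spectrum.smul_eq_smul t a (spectrum_real_nonempty ha)]
  rfl

lemma norm_eq_spectralMax_of_spectrum_nonneg (ha : IsSelfAdjoint a)
    (h : ∀ x ∈ spectrum ℝ a, 0 ≤ x) : ‖a‖ = spectralMax a := by
  refine le_antisymm ?_ (spectralMax_le_norm ha)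
  rcases CStarAlgebra.norm_or_neg_norm_mem_spectrum ha with hm | hm
  · exact le_spectralMax hm
  · obtain ⟨x, hx⟩ := spectrum_real_nonempty ha
    linarith [h _ hm, h x hx, le_spectralMax hx]

lemma norm_add_algebraMap_of_norm_le (ha : IsSelfAdjoint a) {r : ℝ} (hr : ‖a‖ ≤ r) :
    ‖a + algebraMap ℝ 𝒜 r‖ = spectralMax a + r := by
  rw [← spectralMax_add_algebraMap ha r]
  refine norm_eq_spectralMax_of_spectrum_nonneg (ha.add (.algebraMap 𝒜 (.all r))) ?_
  rw [← spectrum.add_singleton_eq, Set.add_singleton]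
  rintro _ ⟨x, hx, rfl⟩
  linarith [neg_abs_le x, abs_le_norm_of_mem_spectrum hx]

lemma spectralMax_add_le (ha : IsSelfAdjoint a) (hb : IsSelfAdjoint b) :
    spectralMax (a + b) ≤ spectralMax a + ‖b‖ := by
  -- after the shift by `R` both sides are positive, so their norms are their spectral maxima
  set R := ‖a‖ + ‖b‖
  have hab := norm_add_algebraMap_of_norm_le (ha.add hb) (norm_add_le a b)
  have ha' := norm_add_algebraMap_of_norm_le ha (le_add_of_nonneg_right (norm_nonneg b))
  have htri : ‖a + b + algebraMap ℝ 𝒜 R‖ ≤ ‖a + algebraMap ℝ 𝒜 R‖ + ‖b‖ := by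
    rw [add_right_comm]
    exact norm_add_le _ _
  linarith

lemma norm_exp_eq_exp_spectralMax (ha : IsSelfAdjoint a) :
    ‖exp a‖ = Real.exp (spectralMax a) := by
  rw [← CFC.real_exp_eq_normedSpace_exp ha, ← spectralMax_eq_of_spectrum_eq_image
    Real.exp_monotone Real.continuous_exp ha (cfc_map_spectrum Real.exp a)]
  refine norm_eq_spectralMax_of_spectrum_nonneg (cfc_predicate Real.exp a) ?_
  rw [cfc_map_spectrum Real.exp a]
  rintro _ ⟨x, -, rfl⟩
  exact (Real.exp_pos x).le

end SpectralMax

theorem norm_exp_sub_exp_le_of_forall_le {𝔸 : Type*} [NormedRing 𝔸] [NormedAlgebra ℝ 𝔸]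
    [CompleteSpace 𝔸] {x y : 𝔸} {C : ℝ}
    (h : ∀ t ∈ Set.Icc (0 : ℝ) 1, ‖exp (t • y)‖ * ‖exp ((1 - t) • x)‖ ≤ C) :
    ‖exp y - exp x‖ ≤ C * ‖y - x‖ := by
  let f : ℝ → 𝔸 := fun t => exp (t • y) * exp ((1 - t) • x)
  let f' : ℝ → 𝔸 := fun t => exp (t • y) * (y - x) * exp ((1 - t) • x)
  have hf : ∀ t, HasDerivAt f (f' t) t := by
    intro t
    have hy := hasDerivAt_exp_smul_const (𝕂 := ℝ) y t
    have hx := (hasDerivAt_exp_smul_const' (𝕂 := ℝ) x (1 - t)).scomp t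
      ((hasDerivAt_id t).const_sub 1)
    refine (hy.mul hx).congr_deriv ?_
    simp only [f', Function.comp_apply, neg_one_smul, mul_neg]
    noncomm_ring
  have hbound : ∀ t ∈ Set.Ico (0 : ℝ) 1, ‖f' t‖ ≤ C * ‖y - x‖ := fun t ht =>
    calc ‖f' t‖ ≤ ‖exp (t • y)‖ * ‖y - x‖ * ‖exp ((1 - t) • x)‖ := norm_mul₃_le
      _ = ‖exp (t • y)‖ * ‖exp ((1 - t) • x)‖ * ‖y - x‖ := by ring
      _ ≤ C * ‖y - x‖ := by gcongr; exact h t (Set.Ico_subset_Icc_self ht)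
  simpa [f] using norm_image_sub_le_of_norm_deriv_le_segment'
    (fun t _ => (hf t).hasDerivWithinAt) hbound 1 (by simp)

lemma tendsto_exp_sub_one_div :
    Tendsto (fun ε : ℝ => (Real.exp ε - 1) / ε) (𝓝[>] 0) (𝓝 1) := by
  have h := (Real.hasDerivAt_exp 0).tendsto_slope_zero_right
  simpa [div_eq_inv_mul] using h

lemma tendsto_div_of_mem_Icc {s : ℝ → ℝ} {K : ℝ}
    (hs : ∀ ε > 0, s ε ∈ Set.Icc ((Real.exp ε - 1) * K) (K * Real.exp ε * ε)) :
    Tendsto (fun ε => s ε / ε) (𝓝[>] 0) (𝓝 K) := by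
  have hlow : Tendsto (fun ε : ℝ => (Real.exp ε - 1) / ε * K) (𝓝[>] 0) (𝓝 K) := by
    simpa using tendsto_exp_sub_one_div.mul_const K
  have hup : Tendsto (fun ε : ℝ => K * Real.exp ε) (𝓝[>] 0) (𝓝 K) := by
    simpa using ((Real.continuous_exp.tendsto 0).const_mul K).mono_left nhdsWithin_le_nhds
  refine tendsto_of_tendsto_of_tendsto_of_le_of_le' hlow hup ?_ ?_ <;>
    filter_upwards [self_mem_nhdsWithin] with ε (hε : 0 < ε)
  · rw [div_mul_eq_mul_div]
    exact div_le_div_of_nonneg_right (hs ε hε).1 hε.le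
  · rw [div_le_iff₀ hε]
    exact (hs ε hε).2

section Deviations

variable {𝒜 : Type*} [CStarAlgebra 𝒜]

/- `sSup (expDeviations x ε) / ε` and `sSup (conditionDeviations c a ε) / ε` are the difference
quotients whose limits as `ε → 0⁺` are the structured level-1 and level-2 condition numbers of
`exp`, with self-adjoint perturbations. -/
def expDeviations (x : 𝒜) (ε : ℝ) : Set ℝ :=
  {r | ∃ y, IsSelfAdjoint y ∧ ‖y - x‖ ≤ ε ∧ r = ‖exp y - exp x‖}

def conditionDeviations (c : 𝒜 → ℝ) (a : 𝒜) (ε : ℝ) : Set ℝ :=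
  {r | ∃ z, IsSelfAdjoint z ∧ ‖z‖ ≤ ε ∧ r = |c (a + z) - c a|}

lemma exists_mem_expDeviations_le {c : 𝒜 → ℝ} (hc : ∀ x, IsSelfAdjoint x → c x = ‖exp x‖)
    {a : 𝒜} (ha : IsSelfAdjoint a) {ε r : ℝ} (hr : r ∈ conditionDeviations c a ε) :
    ∃ r' ∈ expDeviations a ε, r ≤ r' := by
  obtain ⟨z, hz, hzε, rfl⟩ := hr
  refine ⟨_, ⟨a + z, ha.add hz, by rwa [add_sub_cancel_left], rfl⟩, ?_⟩
  rw [hc _ (ha.add hz), hc a ha]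
  exact abs_norm_sub_norm_le _ _

variable [Nontrivial 𝒜] {x y : 𝒜}

lemma norm_exp_sub_exp_le (hx : IsSelfAdjoint x) (hy : IsSelfAdjoint y) :
    ‖exp y - exp x‖ ≤ ‖exp x‖ * Real.exp ‖y - x‖ * ‖y - x‖ := by
  refine norm_exp_sub_exp_le_of_forall_le fun t ⟨ht₀, ht₁⟩ => ?_
  have hweyl : spectralMax y ≤ spectralMax x + ‖y - x‖ := by
    simpa using spectralMax_add_le hx (hy.sub hx)
  rw [norm_exp_eq_exp_spectralMax ((IsSelfAdjoint.all t).smul hy), spectralMax_smul hy ht₀,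
    norm_exp_eq_exp_spectralMax ((IsSelfAdjoint.all (1 - t)).smul hx),
    spectralMax_smul hx (sub_nonneg.mpr ht₁), norm_exp_eq_exp_spectralMax hx,
    ← Real.exp_add, ← Real.exp_add, Real.exp_le_exp]
  nlinarith [norm_nonneg (y - x)]

lemma norm_exp_add_algebraMap (hx : IsSelfAdjoint x) (r : ℝ) :
    ‖exp (x + algebraMap ℝ 𝒜 r)‖ = Real.exp r * ‖exp x‖ := by
  rw [norm_exp_eq_exp_spectralMax (hx.add (.algebraMap 𝒜 (.all r))),
    spectralMax_add_algebraMap hx, norm_exp_eq_exp_spectralMax hx, Real.exp_add, mul_comm]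

lemma le_of_mem_expDeviations (hx : IsSelfAdjoint x) {ε r : ℝ} (hr : r ∈ expDeviations x ε) :
    r ≤ ‖exp x‖ * Real.exp ε * ε := by
  obtain ⟨y, hy, hyx, rfl⟩ := hr
  refine (norm_exp_sub_exp_le hx hy).trans ?_
  gcongr

lemma bddAbove_expDeviations (hx : IsSelfAdjoint x) (ε : ℝ) :
    BddAbove (expDeviations x ε) :=
  ⟨_, fun _ => le_of_mem_expDeviations hx⟩

lemma exists_mem_expDeviations_ge (hx : IsSelfAdjoint x) {ε : ℝ} (hε : 0 ≤ ε) :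
    ∃ r ∈ expDeviations x ε, (Real.exp ε - 1) * ‖exp x‖ ≤ r := by
  refine ⟨_, ⟨x + algebraMap ℝ 𝒜 ε, hx.add (.algebraMap 𝒜 (.all ε)), ?_, rfl⟩, ?_⟩
  · rw [add_sub_cancel_left, norm_algebraMap', Real.norm_of_nonneg hε]
  · calc (Real.exp ε - 1) * ‖exp x‖ = ‖exp (x + algebraMap ℝ 𝒜 ε)‖ - ‖exp x‖ := by
          rw [norm_exp_add_algebraMap hx]; ring
      _ ≤ _ := norm_sub_norm_le _ _

lemma sSup_expDeviations_mem_Icc (hx : IsSelfAdjoint x) {ε : ℝ} (hε : 0 ≤ ε) :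
    sSup (expDeviations x ε) ∈
      Set.Icc ((Real.exp ε - 1) * ‖exp x‖) (‖exp x‖ * Real.exp ε * ε) := by
  obtain ⟨r, hr, hle⟩ := exists_mem_expDeviations_ge hx hε
  exact ⟨le_csSup_of_le (bddAbove_expDeviations hx ε) hr hle,
    csSup_le ⟨r, hr⟩ fun _ => le_of_mem_expDeviations hx⟩

lemma sSup_conditionDeviations_mem_Icc {c : 𝒜 → ℝ}
    (hc : ∀ x, IsSelfAdjoint x → c x = ‖exp x‖) {a : 𝒜} (ha : IsSelfAdjoint a) {ε : ℝ}
    (hε : 0 ≤ ε) :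
    sSup (conditionDeviations c a ε) ∈
      Set.Icc ((Real.exp ε - 1) * ‖exp a‖) (‖exp a‖ * Real.exp ε * ε) := by
  have hbound : ∀ r ∈ conditionDeviations c a ε, r ≤ ‖exp a‖ * Real.exp ε * ε := fun r hr => by
    obtain ⟨r', hr', hle⟩ := exists_mem_expDeviations_le hc ha hr
    exact hle.trans (le_of_mem_expDeviations ha hr')
  have hshift : (Real.exp ε - 1) * ‖exp a‖ ∈ conditionDeviations c a ε := by
    refine ⟨algebraMap ℝ 𝒜 ε, .algebraMap 𝒜 (.all ε), ?_, ?_⟩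
    · rw [norm_algebraMap', Real.norm_of_nonneg hε]
    · have hgrowth : 0 ≤ Real.exp ε - 1 := sub_nonneg.mpr (Real.one_le_exp hε)
      rw [hc _ (ha.add (.algebraMap 𝒜 (.all ε))), hc a ha, norm_exp_add_algebraMap ha,
        ← sub_one_mul, abs_of_nonneg (mul_nonneg hgrowth (norm_nonneg _))]
  exact ⟨le_csSup ⟨_, hbound⟩ hshift, csSup_le ⟨_, hshift⟩ hbound⟩

lemma tendsto_sSup_expDeviations_div {x : 𝒜} (hx : IsSelfAdjoint x) :
    Tendsto (fun ε => sSup (expDeviations x ε) / ε) (𝓝[>] 0) (𝓝 ‖exp x‖) :=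
  tendsto_div_of_mem_Icc fun _ hε => sSup_expDeviations_mem_Icc hx hε.le

theorem tendsto_sSup_conditionDeviations_div {c : 𝒜 → ℝ}
    (hc : ∀ x, IsSelfAdjoint x →
      Tendsto (fun ε => sSup (expDeviations x ε) / ε) (𝓝[>] 0) (𝓝 (c x)))
    {a : 𝒜} (ha : IsSelfAdjoint a) :
    Tendsto (fun ε => sSup (conditionDeviations c a ε) / ε) (𝓝[>] 0) (𝓝 ‖exp a‖) := by
  have hc' : ∀ x, IsSelfAdjoint x → c x = ‖exp x‖ := fun x hx =>
    tendsto_nhds_unique (hc x hx) (tendsto_sSup_expDeviations_div hx)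
  exact tendsto_div_of_mem_Icc fun _ hε => sSup_conditionDeviations_mem_Icc hc' ha hε.le

end Deviations

/-- Proposition 3.3 of the paper. If `c X` is the structured level-1 condition
number (in the spectral norm) of the matrix exponential at a Hermitian `X`, with Hermitian
perturbations, then the structured level-2 condition number of the matrix exponential at a
Hermitian `A` equals `e^{λmax(A)}`. -/
theorem structured_level2_condition_number_exp_hermitian
    (n : ℕ) (hn : 1 ≤ n)
    (A : Matrix (Fin n) (Fin n) ℂ) (hA : A.IsHermitian)
    (c : Matrix (Fin n) (Fin n) ℂ → ℝ)
    (hc : ∀ X : Matrix (Fin n) (Fin n) ℂ, X.IsHermitian →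
      Tendsto (fun ε : ℝ =>
          (sSup {r : ℝ | ∃ Y : Matrix (Fin n) (Fin n) ℂ, Y.IsHermitian ∧ ‖Y - X‖ ≤ ε ∧
            r = ‖NormedSpace.exp Y - NormedSpace.exp X‖}) / ε)
        (𝓝[>] 0) (𝓝 (c X))) :
    Tendsto (fun ε : ℝ =>
        (sSup {r : ℝ | ∃ Z : Matrix (Fin n) (Fin n) ℂ, Z.IsHermitian ∧ ‖Z‖ ≤ ε ∧
          r = |c (A + Z) - c A|}) / ε)
      (𝓝[>] 0) (𝓝 (Real.exp (⨆ i, hA.eigenvalues i))) := by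
  have : Nonempty (Fin n) := ⟨⟨0, hn⟩⟩
  have hnorm : Real.exp (⨆ i, hA.eigenvalues i) = ‖exp A‖ := by
    rw [norm_exp_eq_exp_spectralMax hA, spectralMax, hA.spectrum_real_eq_range_eigenvalues]
    rfl
  rw [hnorm]
  exact tendsto_sSup_conditionDeviations_div hc hA
end
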